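/- arXiv:2511.14395 — 3 statements merged into one kernel-verified Lean document; each statement's English description precedes it below -/
import Mathlib

section
/- Let F be a field of characteristic 2 and a, b ∈ F. Then there exists a field extension L of F of degree 1 or 3 and elements x, c ∈ L such that in W₂(L) one has (a,b) + (x^2,0) - (x,0) = (c, 0). -/
/-!
The length-two addition law `(u + v)₁ = u₁ + v₁ - u₀ v₀` of `2`-typical Witt vectors shows that
the second coordinate of `(a, b) + (x ^ 2, 0) - (x, 0)` is the monic cubic
`x ^ 3 - (a + 1) x ^ 2 + a x + b`. Either this cubic has a root in `F`, or it is irreducible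
and acquires a root in its root field, of degree `3`.
-/

universe u

namespace WittVector

open MvPolynomial

/-- Forced by additivity of the ghost component `X₀ ^ 2 + 2 X₁`. -/
theorem wittAdd_two_one :
    wittAdd 2 1 = (X (0, 1) + X (1, 1) - X (0, 0) * X (1, 0) : MvPolynomial (Fin 2 × ℕ) ℤ) := by
  apply MvPolynomial.map_injective (Int.castRingHom ℚ) Int.cast_injective
  rw [wittAdd, map_wittStructureInt, wittStructureRat_rec]
  have hC : (C 2 : MvPolynomial (Fin 2 × ℕ) ℚ) = 2 := map_ofNat C 2
  have h : (C 2⁻¹ * C 2 : MvPolynomial (Fin 2 × ℕ) ℚ) = 1 := by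
    rw [← C_mul, inv_mul_cancel₀ two_ne_zero, C_1]
  simp only [Nat.cast_ofNat, pow_one, one_div, wittPolynomial_one, map_add, map_mul, algHom_C,
    algebraMap_eq, rename_X, map_pow, map_X, bind₁_X_right, Finset.range_one,
    wittStructureRat, Finset.sum_singleton, pow_zero, xInTermsOfW_zero, wittPolynomial_zero,
    tsub_zero, one_mul, map_sub]
  linear_combination
    (X (0, 1) + X (1, 1) - X (0, 0) * X (1, 0)) * h + C 2⁻¹ * X (0, 0) * X (1, 0) * hC

variable {R : Type*} [CommRing R]

theorem add_coeff_one_of_two (x y : WittVector 2 R) :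
    (x + y).coeff 1 = x.coeff 1 + y.coeff 1 - x.coeff 0 * y.coeff 0 := by
  simp [add_coeff, wittAdd_two_one, peval, Function.uncurry]

theorem sub_coeff_zero {p : ℕ} [Fact p.Prime] (x y : WittVector p R) :
    (x - y).coeff 0 = x.coeff 0 - y.coeff 0 := by
  simp [sub_coeff, peval, Function.uncurry]

theorem sub_coeff_one_of_two (x y : WittVector 2 R) :
    (x - y).coeff 1 = x.coeff 1 - y.coeff 1 + (x.coeff 0 - y.coeff 0) * y.coeff 0 := by
  have h := add_coeff_one_of_two (x - y) y
  rw [sub_add_cancel, sub_coeff_zero] at h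
  linear_combination -h

end WittVector

namespace TruncatedWittVector

variable {p n : ℕ} {R : Type*} [CommRing R]

theorem coeff_out_mk (v : Fin n → R) {i : ℕ} (hi : i < n) :
    (mk p v).out.coeff i = v ⟨i, hi⟩ :=
  coeff_out (mk p v) ⟨i, hi⟩

variable [Fact p.Prime]

theorem coeff_add (x y : TruncatedWittVector p n R) (i : Fin n) :
    (x + y).coeff i = (x.out + y.out).coeff i :=
  WittVector.coeff_truncateFun _ i

theorem coeff_sub (x y : TruncatedWittVector p n R) (i : Fin n) :
    (x - y).coeff i = (x.out - y.out).coeff i :=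
  WittVector.coeff_truncateFun _ i

theorem mk_two_add (a b c d : R) :
    mk 2 ![a, b] + mk 2 ![c, d] = mk 2 ![a + c, b + d - a * c] := by
  ext i
  fin_cases i <;>
    simp [coeff_add, coeff_out_mk, WittVector.add_coeff_zero, WittVector.add_coeff_one_of_two]

theorem mk_two_sub (a b c d : R) :
    mk 2 ![a, b] - mk 2 ![c, d] = mk 2 ![a - c, b - d + (a - c) * c] := by
  ext i
  fin_cases i <;>
    simp [coeff_sub, coeff_out_mk, WittVector.sub_coeff_zero, WittVector.sub_coeff_one_of_two]

theorem mk_two_add_sq_sub (a b x : R) :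
    mk 2 ![a, b] + mk 2 ![x ^ 2, 0] - mk 2 ![x, 0] =
      mk 2 ![a + x ^ 2 - x, x ^ 3 - (a + 1) * x ^ 2 + a * x + b] := by
  rw [mk_two_add, mk_two_sub]
  congr 2
  ring_nf

end TruncatedWittVector

namespace Polynomial

theorem exists_aeval_eq_zero_of_natDegree_eq_three {F : Type u} [Field F] {f : F[X]}
    (hf : f.natDegree = 3) :
    ∃ (L : Type u) (_ : Field L) (_ : Algebra F L),
      (Module.finrank F L = 1 ∨ Module.finrank F L = 3) ∧ ∃ x : L, aeval x f = 0 := by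
  by_cases hroot : ∃ r, f.IsRoot r
  · obtain ⟨r, hr⟩ := hroot
    exact ⟨F, _, _, Or.inl (Module.finrank_self F), r, by simpa using hr⟩
  · push Not at hroot
    have : Fact (Irreducible f) :=
      ⟨irreducible_of_degree_le_three_of_not_isRoot (by simp [hf]) hroot⟩
    exact ⟨AdjoinRoot f, _, _, Or.inr (finrank_quotient_span_eq_natDegree.trans hf),
      AdjoinRoot.root f, by rw [AdjoinRoot.aeval_eq, AdjoinRoot.mk_self]⟩

end Polynomial

open Polynomial in
theorem stmt5_general {F : Type u} [Field F] (a b : F) :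
    ∃ (L : Type u) (_ : Field L) (_ : Algebra F L),
      (Module.finrank F L = 1 ∨ Module.finrank F L = 3) ∧
      ∃ x c : L,
        TruncatedWittVector.mk 2 ![algebraMap F L a, algebraMap F L b] +
            TruncatedWittVector.mk 2 ![x ^ 2, 0] - TruncatedWittVector.mk 2 ![x, 0] =
          TruncatedWittVector.mk 2 ![c, 0] := by
  obtain ⟨L, _, _, hL, x, hx⟩ := exists_aeval_eq_zero_of_natDegree_eq_three
    (f := X ^ 3 - C (a + 1) * X ^ 2 + C a * X + C b) (by compute_degree!)
  refine ⟨L, _, _, hL, x, algebraMap F L a + x ^ 2 - x, ?_⟩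
  simp only [map_add, map_sub, map_mul, map_pow, aeval_X, aeval_C, map_one] at hx
  rw [TruncatedWittVector.mk_two_add_sq_sub, hx]

theorem stmt5 {F : Type u} [Field F] [CharP F 2] (a b : F) :
    ∃ (L : Type u) (_ : Field L) (_ : Algebra F L),
      (Module.finrank F L = 1 ∨ Module.finrank F L = 3) ∧
      ∃ x c : L,
        TruncatedWittVector.mk 2 ![algebraMap F L a, algebraMap F L b] +
            TruncatedWittVector.mk 2 ![x ^ 2, 0] - TruncatedWittVector.mk 2 ![x, 0] =
          TruncatedWittVector.mk 2 ![c, 0] :=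
  stmt5_general a b
end

section
/- Let p be an odd prime, F a field of characteristic p, and a, b ∈ F. Consider the polynomial f(x) = b - ∑_{t=1}^{p-1} (-1)^{t-1} t^{-1} ( x^{tp} a^{p-t} + (a + x^p)^t (-x)^{p-t} ) in F[x], where t^{-1} denotes the inverse of t in F. Then f has degree exactly p^2 - p + 1, and its leading coefficient is a unit (in fact ±1). -/
/-!
The `t`-th summand has degree at most `tp + (p - t)`, which is below `N = (p - 1)p + 1 = p² - p + 1`
unless `t = p - 1`. In that summand the scalar `(-1)^(p-2) / (p - 1)` equals `1` in characteristic
`p` (as `p - 1 = -1` and `p - 2` is odd), and `(a + X^p)^(p-1) · (-X)` contributes `-X^N`. Hence the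
coefficient of `X^N` in `f` is `1` and nothing of higher degree occurs.
-/

open Polynomial Finset

section CommRing

variable {R : Type*} [CommRing R]

noncomputable def wittTerm (p : ℕ) (a : R) (t : ℕ) : R[X] :=
  X ^ (t * p) * C (a ^ (p - t)) + (C a + X ^ p) ^ t * (-X) ^ (p - t)

theorem natDegree_wittTerm_le (p : ℕ) (a : R) (t : ℕ) :
    (wittTerm p a t).natDegree ≤ t * p + (p - t) := by
  have hbase : (C a + X ^ p : R[X]).natDegree ≤ p :=
    (natDegree_add_le _ _).trans (by simpa using natDegree_X_pow_le p)
  refine (natDegree_add_le _ _).trans (max_le ?_ ?_)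
  · exact natDegree_mul_le.trans (by
      rw [natDegree_C, add_zero]; exact (natDegree_X_pow_le _).trans (Nat.le_add_right _ _))
  · refine natDegree_mul_le.trans (add_le_add ?_ ?_)
    · exact natDegree_pow_le.trans (Nat.mul_le_mul_left t hbase)
    · exact natDegree_pow_le.trans
        (by simpa using Nat.mul_le_mul_left (p - t) (natDegree_X_le (R := R)))

theorem coeff_wittTerm_pred [Nontrivial R] {p : ℕ} (hp : p ≠ 0) (a : R) :
    (wittTerm p a (p - 1)).coeff ((p - 1) * p + 1) = -1 := by
  have hmonic : (C a + X ^ p : R[X]).Monic := by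
    rw [add_comm]; exact monic_X_pow_add_C a hp
  have hdeg : ((C a + X ^ p : R[X]) ^ (p - 1)).natDegree = (p - 1) * p := by
    rw [hmonic.natDegree_pow, add_comm, natDegree_X_pow_add_C]
  have hlow :
      (X ^ ((p - 1) * p) * C (a ^ (p - (p - 1))) : R[X]).coeff ((p - 1) * p + 1) = 0 := by
    rw [coeff_X_pow_mul', if_pos (by omega), Nat.add_sub_cancel_left, coeff_C_succ]
  rw [wittTerm, coeff_add, hlow, Nat.sub_sub_self (Nat.one_le_iff_ne_zero.mpr hp), pow_one,
    mul_neg, coeff_neg, coeff_mul_X, ← hdeg, (hmonic.pow _).coeff_natDegree, zero_add]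

end CommRing

theorem mul_add_sub_lt_pred_mul_add_one {p t : ℕ} (ht : t < p - 1) :
    t * p + (p - t) < (p - 1) * p + 1 := by
  obtain ⟨k, rfl⟩ : ∃ k, p = t + 2 + k := ⟨p - t - 2, by omega⟩
  rw [show t + 2 + k - t = k + 2 by omega, show t + 2 + k - 1 = t + 1 + k by omega]
  nlinarith

section CharP

variable (p : ℕ) [Fact p.Prime] {F : Type*} [Field F] [CharP F p]

theorem neg_one_pow_mul_inv_cast_pred (hodd : Odd p) :
    (-1 : F) ^ (p - 1 - 1) * ((p - 1 : ℕ) : F)⁻¹ = 1 := by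
  have hp : 2 ≤ p := (Fact.out : p.Prime).two_le
  have hcast : ((p - 1 : ℕ) : F) = -1 := by
    rw [Nat.cast_pred (by omega), CharP.cast_eq_zero F p, zero_sub]
  have hexp : Odd (p - 1 - 1) := by
    obtain ⟨k, hk⟩ := hodd
    exact ⟨k - 1, by omega⟩
  rw [hcast, hexp.neg_one_pow]
  norm_num

end CharP

section WittPoly

variable (p : ℕ) {F : Type*} [Field F] (a b : F)

/-- The second Witt coordinate of `(a, b) + (X^p, 0) - (X, 0)` in `W₂(F)` when `char F = p`. -/
noncomputable def wittPoly : F[X] :=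
  C b - ∑ t ∈ Icc 1 (p - 1), C ((-1 : F) ^ (t - 1) * (t : F)⁻¹) * wittTerm p a t

theorem natDegree_wittPoly_le : (wittPoly p a b).natDegree ≤ (p - 1) * p + 1 := by
  refine (natDegree_sub_le _ _).trans (max_le (by simp) ?_)
  refine natDegree_sum_le_of_forall_le _ _ fun t ht => natDegree_C_mul_le _ _ |>.trans ?_
  rcases (mem_Icc.1 ht).2.lt_or_eq with ht | rfl
  · exact (natDegree_wittTerm_le p a t).trans (mul_add_sub_lt_pred_mul_add_one ht).le
  · exact (natDegree_wittTerm_le p a _).trans (Nat.add_le_add_left (by omega) _)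

theorem coeff_wittPoly [Fact p.Prime] [CharP F p] (hodd : Odd p) :
    (wittPoly p a b).coeff ((p - 1) * p + 1) = 1 := by
  have hp : 2 ≤ p := (Fact.out : p.Prime).two_le
  have hsum : (∑ t ∈ Icc 1 (p - 1), C ((-1 : F) ^ (t - 1) * (t : F)⁻¹) * wittTerm p a t).coeff
      ((p - 1) * p + 1) = -1 := by
    rw [finsetSum_coeff, sum_eq_single_of_mem (p - 1) (mem_Icc.2 ⟨by omega, le_rfl⟩)]
    · rw [coeff_C_mul, coeff_wittTerm_pred (by omega), neg_one_pow_mul_inv_cast_pred p hodd,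
        one_mul]
    · intro t ht hne
      refine coeff_eq_zero_of_natDegree_lt ((natDegree_C_mul_le _ _).trans_lt ?_)
      exact (natDegree_wittTerm_le p a t).trans_lt
        (mul_add_sub_lt_pred_mul_add_one (lt_of_le_of_ne (mem_Icc.1 ht).2 hne))
  rw [wittPoly, coeff_sub, hsum, coeff_C, if_neg (by omega), zero_sub, neg_neg]

theorem natDegree_wittPoly [Fact p.Prime] [CharP F p] (hodd : Odd p) :
    (wittPoly p a b).natDegree = (p - 1) * p + 1 :=
  natDegree_eq_of_le_of_coeff_ne_zero (natDegree_wittPoly_le p a b)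
    (by rw [coeff_wittPoly p a b hodd]; exact one_ne_zero)

theorem leadingCoeff_wittPoly [Fact p.Prime] [CharP F p] (hodd : Odd p) :
    (wittPoly p a b).leadingCoeff = 1 := by
  rw [leadingCoeff, natDegree_wittPoly p a b hodd, coeff_wittPoly p a b hodd]

end WittPoly

theorem stmt7 (p : ℕ) [Fact p.Prime] (hodd : Odd p) {F : Type*} [Field F] [CharP F p]
    (a b : F) :
    (Polynomial.C b - ∑ t ∈ Finset.Icc 1 (p - 1),
        Polynomial.C ((-1 : F) ^ (t - 1) * (t : F)⁻¹) *
          (Polynomial.X ^ (t * p) * Polynomial.C (a ^ (p - t)) +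
            (Polynomial.C a + Polynomial.X ^ p) ^ t * (-Polynomial.X) ^ (p - t))).natDegree =
        p ^ 2 - p + 1 ∧
    ((Polynomial.C b - ∑ t ∈ Finset.Icc 1 (p - 1),
        Polynomial.C ((-1 : F) ^ (t - 1) * (t : F)⁻¹) *
          (Polynomial.X ^ (t * p) * Polynomial.C (a ^ (p - t)) +
            (Polynomial.C a + Polynomial.X ^ p) ^ t * (-Polynomial.X) ^ (p - t))).leadingCoeff = 1 ∨
     (Polynomial.C b - ∑ t ∈ Finset.Icc 1 (p - 1),
        Polynomial.C ((-1 : F) ^ (t - 1) * (t : F)⁻¹) *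
          (Polynomial.X ^ (t * p) * Polynomial.C (a ^ (p - t)) +
            (Polynomial.C a + Polynomial.X ^ p) ^ t * (-Polynomial.X) ^ (p - t))).leadingCoeff = -1) := by
  exact ⟨(natDegree_wittPoly p a b hodd).trans (by rw [Nat.sub_one_mul, sq]),
    Or.inl (leadingCoeff_wittPoly p a b hodd)⟩
end

section
/- Let p be a prime, F a field of characteristic p, and a, b ∈ F. Then there exists a field extension L of F with [L:F] ≤ p^2 - p + 1 and [L:F] not divisible by p, and elements x, c ∈ L, such that in W₂(L) one has (a,b) + (x^p, 0) - (x, 0) = (c, 0). -/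
universe u

/-- The correction term in the second Witt coordinate of a sum. -/
noncomputable def eAux (p : ℕ) {R : Type*} [CommRing R] (u v : R) : R :=
  ∑ i ∈ Finset.Ioo 0 p, ((p.choose i / p : ℕ) : R) * u ^ i * v ^ (p - i)

theorem map_eAux {R S F' : Type*} [CommRing R] [CommRing S] [FunLike F' R S]
    [RingHomClass F' R S] (f : F') (p : ℕ) (u v : R) :
    f (eAux p u v) = eAux p (f u) (f v) := by
  simp [eAux, map_sum, map_mul, map_pow, map_natCast]

theorem add_pow_prime_eq_eAux {R : Type*} [CommRing R] {p : ℕ} (hp : p.Prime) (u v : R) :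
    (u + v) ^ p = u ^ p + v ^ p + p * eAux p u v := by
  have key : ∀ i ∈ Finset.Ioo 0 p,
      u ^ i * v ^ (p - i) * (p.choose i : R) =
        (p : R) * (((p.choose i / p : ℕ) : R) * u ^ i * v ^ (p - i)) := by
    intro i hi
    obtain ⟨h1, h2⟩ := Finset.mem_Ioo.1 hi
    have hd : p ∣ p.choose i := hp.dvd_choose_self (by omega : i ≠ 0) h2
    have hc : ((p.choose i : ℕ) : R) = (p : R) * ((p.choose i / p : ℕ) : R) := by
      rw [← Nat.cast_mul, Nat.mul_div_cancel' hd]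
    rw [hc]; ring
  have h0 : (0 : ℕ) ∈ Finset.range p := Finset.mem_range.2 hp.pos
  rw [add_pow, Finset.sum_range_succ, ← Finset.sum_erase_add _ _ h0,
    Finset.range_eq_Ico, Finset.Ico_erase_left, Finset.sum_congr rfl key,
    ← Finset.mul_sum]
  simp only [pow_zero, Nat.sub_zero, one_mul, Nat.choose_zero_right, Nat.cast_one, mul_one,
    Nat.choose_self, Nat.sub_self]
  rw [eAux]
  ring

open MvPolynomial in
theorem wittAdd_one (p : ℕ) [hp : Fact p.Prime] :
    WittVector.wittAdd p 1 =
      X (0, 1) + X (1, 1) - eAux p (X (0, 0)) (X (1, 0)) := by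
  have key := wittStructureInt_prop p (X 0 + X 1 : MvPolynomial (Fin 2) ℤ) 1
  rw [wittPolynomial_one] at key
  simp only [map_add, map_mul, bind₁_C_right, bind₁_X_right, map_pow, rename_X, map_C,
    algHom_C, algebraMap_eq] at key
  have h0 : wittStructureInt p (X 0 + X 1 : MvPolynomial (Fin 2) ℤ) 0 = X (0,0) + X (1,0) :=
    WittVector.wittAdd_zero p
  rw [h0] at key
  have hb := add_pow_prime_eq_eAux hp.out (X (0, 0) : MvPolynomial (Fin 2 × ℕ) ℤ) (X (1, 0))
  have hcast : ((p : ℕ) : MvPolynomial (Fin 2 × ℕ) ℤ) = C (p : ℤ) := by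
    simp
  rw [hcast] at hb
  have hC : (C (p : ℤ) : MvPolynomial (Fin 2 × ℕ) ℤ) ≠ 0 := by
    simpa using (Nat.cast_ne_zero (R := ℤ)).2 hp.out.ne_zero
  apply mul_left_cancel₀ hC
  have : WittVector.wittAdd p 1 = wittStructureInt p (X 0 + X 1 : MvPolynomial (Fin 2) ℤ) 1 := rfl
  rw [this]
  linear_combination key - hb



open Polynomial in
theorem gMonic {F : Type*} [Field F] (p : ℕ) (hp2 : 2 ≤ p) (a b : F) :
    (Polynomial.C b - eAux p (Polynomial.C a) (Polynomial.X ^ p)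
      + eAux p (Polynomial.C a + Polynomial.X ^ p - Polynomial.X) Polynomial.X).Monic ∧
    (Polynomial.C b - eAux p (Polynomial.C a) (Polynomial.X ^ p)
      + eAux p (Polynomial.C a + Polynomial.X ^ p - Polynomial.X) Polynomial.X).natDegree
      = (p - 1) * p + 1 := by
  set A : F[X] := Polynomial.C a + Polynomial.X ^ p - Polynomial.X with hA_def
  set T : F[X] := A ^ (p - 1) * Polynomial.X with hT_def
  -- A is monic of degree p
  have hAeq : A = Polynomial.X ^ p + (Polynomial.C a - Polynomial.X) := by rw [hA_def]; ring
  have hdlt : (Polynomial.C a - Polynomial.X : F[X]).degree < (p : ℕ) := by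
    refine lt_of_le_of_lt (degree_sub_le _ _) ?_
    refine max_lt (lt_of_le_of_lt degree_C_le ?_) ?_
    · exact_mod_cast (by omega : 0 < p)
    · rw [degree_X]; exact_mod_cast (by omega : 1 < p)
  have hA : A.Monic := by rw [hAeq]; exact monic_X_pow_add hdlt
  have hAdeg : A.natDegree = p := by
    rw [hAeq]
    refine natDegree_eq_of_degree_eq_some ?_
    rw [degree_add_eq_left_of_degree_lt (by rwa [degree_X_pow]), degree_X_pow]
  have hT : T.Monic := (hA.pow _).mul monic_X
  have hTdeg : T.natDegree = (p - 1) * p + 1 := by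
    rw [hT_def, natDegree_mul (hA.pow _).ne_zero X_ne_zero, natDegree_pow, hAdeg, natDegree_X]
  obtain ⟨k, rfl⟩ : ∃ k, p = k + 2 := ⟨p - 2, by omega⟩
  set p := k + 2 with hp_def
  have hmem : p - 1 ∈ Finset.Ioo 0 p := by
    simp only [Finset.mem_Ioo]; omega
  have hterm : ((p.choose (p - 1) / p : ℕ) : F[X]) * A ^ (p - 1) * Polynomial.X ^ (p - (p - 1))
      = T := by
    have h1 : p.choose (p - 1) = p := by
      have := Nat.choose_symm (n := p) (k := 1) (by omega)
      rw [this, Nat.choose_one_right]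
    rw [h1, Nat.div_self (by omega), show p - (p - 1) = 1 by omega]
    simp [hT_def]
  have hsplit : eAux p A Polynomial.X =
      (∑ i ∈ (Finset.Ioo 0 p).erase (p - 1),
        ((p.choose i / p : ℕ) : F[X]) * A ^ i * Polynomial.X ^ (p - i)) + T := by
    rw [eAux, ← Finset.sum_erase_add _ _ hmem, hterm]
  set S : F[X] := Polynomial.C b - eAux p (Polynomial.C a) (Polynomial.X ^ p)
      + ∑ i ∈ (Finset.Ioo 0 p).erase (p - 1),
        ((p.choose i / p : ℕ) : F[X]) * A ^ i * Polynomial.X ^ (p - i) with hS_def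
  have hd1 : (Polynomial.C b).natDegree ≤ (p - 1) * p := by
    simp [natDegree_C]
  have hd2 : (eAux p (Polynomial.C a) (Polynomial.X ^ p) : F[X]).natDegree ≤ (p - 1) * p := by
    rw [eAux]
    apply Polynomial.natDegree_sum_le_of_forall_le
    intro i hi
    obtain ⟨h1, h2⟩ := Finset.mem_Ioo.1 hi
    refine le_trans natDegree_mul_le ?_
    rw [← pow_mul, natDegree_X_pow]
    refine le_trans (add_le_add natDegree_mul_le le_rfl) ?_
    rw [natDegree_natCast, natDegree_pow, natDegree_C]
    have h3 : p * (p - i) ≤ p * (p - 1) := Nat.mul_le_mul_left _ (by omega)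
    calc 0 + i * 0 + p * (p - i) ≤ p * (p - 1) := by omega
      _ = (p - 1) * p := Nat.mul_comm _ _
  have hd3 : (∑ i ∈ (Finset.Ioo 0 p).erase (p - 1),
      ((p.choose i / p : ℕ) : F[X]) * A ^ i * Polynomial.X ^ (p - i)).natDegree
      ≤ (p - 1) * p := by
    apply Polynomial.natDegree_sum_le_of_forall_le
    intro i hi
    obtain ⟨hne, hio⟩ := Finset.mem_erase.1 hi
    obtain ⟨h1, h2⟩ := Finset.mem_Ioo.1 hio
    have hik : i ≤ k := by omega
    refine le_trans natDegree_mul_le ?_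
    rw [natDegree_X_pow]
    refine le_trans (add_le_add natDegree_mul_le le_rfl) ?_
    rw [natDegree_natCast, natDegree_pow, hAdeg]
    have hmul : i * p ≤ k * p := Nat.mul_le_mul_right _ hik
    have hexp : (p - 1) * p = k * p + p := by
      have h4 : p - 1 = k + 1 := by omega
      rw [h4, hp_def]; ring
    calc 0 + i * p + (p - i) ≤ k * p + p := by omega
      _ = (p - 1) * p := hexp.symm
  have hS : S.natDegree ≤ (p - 1) * p := by
    refine le_trans (natDegree_add_le _ _) (max_le (le_trans (natDegree_sub_le _ _) ?_) hd3)
    exact max_le hd1 hd2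
  have hSdeg : S.degree < T.degree := by
    rw [degree_eq_natDegree hT.ne_zero, hTdeg]
    refine lt_of_le_of_lt degree_le_natDegree ?_
    exact_mod_cast (by omega : S.natDegree < (p - 1) * p + 1)
  have hgeq : Polynomial.C b - eAux p (Polynomial.C a) (Polynomial.X ^ p) + eAux p A Polynomial.X
      = S + T := by
    rw [hS_def, hsplit]; ring
  rw [hgeq]
  exact ⟨Monic.add_of_right hT hSdeg, natDegree_eq_of_degree_eq_some
    (by rw [degree_add_eq_right_of_degree_lt hSdeg, degree_eq_natDegree hT.ne_zero, hTdeg])⟩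


open Polynomial in
theorem exists_irred_factor {F : Type*} [Field F] (p : ℕ) :
    ∀ n (f : F[X]), f.natDegree = n → f.Monic → ¬ p ∣ f.natDegree →
      ∃ q : F[X], q.Monic ∧ Irreducible q ∧ q ∣ f ∧ ¬ p ∣ q.natDegree ∧
        q.natDegree ≤ f.natDegree := by
  intro n
  induction n using Nat.strong_induction_on with
  | _ n ih =>
    intro f hfn hm hd
    by_cases hf : Irreducible f
    · exact ⟨f, hm, hf, dvd_rfl, hd, le_rfl⟩
    have hne : f ≠ 0 := hm.ne_zero
    have hdeg0 : f.natDegree ≠ 0 := fun h => hd (h ▸ dvd_zero p)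
    have hu : ¬ IsUnit f := fun h => hdeg0 (natDegree_eq_zero_of_isUnit h)
    rw [irreducible_iff] at hf
    push_neg at hf
    obtain ⟨x, y, hxy, hx, hy⟩ := hf hu
    have hx0 : x ≠ 0 := fun h => hne (by rw [hxy, h, zero_mul])
    have hy0 : y ≠ 0 := fun h => hne (by rw [hxy, h, mul_zero])
    have unitdeg : ∀ z : F[X], z ≠ 0 → z.natDegree = 0 → IsUnit z := by
      intro z hz0 h
      obtain ⟨c, hc⟩ := Polynomial.natDegree_eq_zero.1 h
      rw [← hc]
      exact isUnit_C.2 (isUnit_iff_ne_zero.2 (fun h0 => hz0 (by rw [← hc, h0, map_zero])))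
    have hdx : x.natDegree ≠ 0 := fun h => hx (unitdeg x hx0 h)
    have hdy : y.natDegree ≠ 0 := fun h => hy (unitdeg y hy0 h)
    have hsum : x.natDegree + y.natDegree = n := by
      rw [← hfn, hxy, natDegree_mul hx0 hy0]
    have main : ∀ z : F[X], z ≠ 0 → ¬ p ∣ z.natDegree → z.natDegree < n → z ∣ f →
        ∃ q : F[X], q.Monic ∧ Irreducible q ∧ q ∣ f ∧ ¬ p ∣ q.natDegree ∧
          q.natDegree ≤ f.natDegree := by
      intro z hz0 hzd hzn hzf
      set z' := z * C (z.leadingCoeff)⁻¹ with hz'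
      have hz'm : z'.Monic := monic_mul_leadingCoeff_inv hz0
      have hz'd : z'.natDegree = z.natDegree :=
        natDegree_eq_natDegree (degree_mul_leadingCoeff_inv z hz0)
      obtain ⟨q, hq1, hq2, hq3, hq4, hq5⟩ :=
        ih z'.natDegree (by omega) z' rfl hz'm (by rwa [hz'd])
      have hz'z : z' ∣ z := ⟨C z.leadingCoeff, by
        rw [hz', mul_assoc, ← C_mul, inv_mul_cancel₀ (leadingCoeff_ne_zero.2 hz0), C_1, mul_one]⟩
      exact ⟨q, hq1, hq2, hq3.trans (hz'z.trans hzf), by omega, by omega⟩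
    by_cases hpx : p ∣ x.natDegree
    · have hpy : ¬ p ∣ y.natDegree := fun h => hd (by rw [hfn, ← hsum]; exact dvd_add hpx h)
      exact main y hy0 hpy (by omega) ⟨x, by rw [hxy]; ring⟩
    · exact main x hx0 hpx (by omega) ⟨y, hxy⟩


theorem add_coeff_one {p : ℕ} [hp : Fact p.Prime] {R : Type*} [CommRing R]
    (u v : WittVector p R) :
    (u + v).coeff 1 = u.coeff 1 + v.coeff 1 - eAux p (u.coeff 0) (v.coeff 0) := by
  rw [WittVector.add_coeff, WittVector.peval, wittAdd_one, eAux]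
  simp [Function.uncurry, map_sum, map_natCast, eAux]

theorem mk_eq_truncate {p : ℕ} [Fact p.Prime] {L : Type*} [CommRing L] (u v : L) :
    TruncatedWittVector.mk p ![u, v] =
      WittVector.truncate 2
        (WittVector.mk p (fun n => if n = 0 then u else if n = 1 then v else 0)) := by
  ext i
  rw [WittVector.coeff_truncate]
  simp only [WittVector.coeff_mk, TruncatedWittVector.coeff_mk]
  fin_cases i <;> simp

theorem stmt8 (p : ℕ) [Fact p.Prime] {F : Type u} [Field F] [CharP F p] (a b : F) :
    ∃ (L : Type u) (_ : Field L) (_ : Algebra F L) (_ : FiniteDimensional F L),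
      Module.finrank F L ≤ p ^ 2 - p + 1 ∧ ¬ p ∣ Module.finrank F L ∧
      ∃ x c : L,
        TruncatedWittVector.mk p ![algebraMap F L a, algebraMap F L b] +
            TruncatedWittVector.mk p ![x ^ p, 0] - TruncatedWittVector.mk p ![x, 0] =
          TruncatedWittVector.mk p ![c, 0] := by
  have hp2 : 2 ≤ p := (Fact.out : p.Prime).two_le
  obtain ⟨hmonic, hdeg⟩ := gMonic p hp2 a b
  set g : Polynomial F := Polynomial.C b - eAux p (Polynomial.C a) (Polynomial.X ^ p)
    + eAux p (Polynomial.C a + Polynomial.X ^ p - Polynomial.X) Polynomial.X with hg_def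
  have hNdvd : ¬ p ∣ (p - 1) * p + 1 := by
    intro h
    have h1 : p ∣ (p - 1) * p + 1 - (p - 1) * p :=
      Nat.dvd_sub h (dvd_mul_left p (p - 1))
    rw [Nat.add_sub_cancel_left] at h1
    exact absurd (Nat.le_of_dvd one_pos h1) (by omega)
  obtain ⟨q, hq1, hq2, hq3, hq4, hq5⟩ :=
    exists_irred_factor p g.natDegree g rfl hmonic (by rwa [hdeg])
  haveI : Fact (Irreducible q) := ⟨hq2⟩
  have hq0 : q ≠ 0 := hq1.ne_zero
  let pb := AdjoinRoot.powerBasis hq0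
  haveI hfin : FiniteDimensional F (AdjoinRoot q) := Module.Finite.of_basis pb.basis
  have hfr : Module.finrank F (AdjoinRoot q) = q.natDegree := by
    rw [pb.finrank]; rfl
  have hNN : (p - 1) * p + 1 = p ^ 2 - p + 1 := by
    rw [pow_two, Nat.sub_mul, one_mul]
  refine ⟨AdjoinRoot q, inferInstance, inferInstance, hfin, ?_, ?_, ?_⟩
  · rw [hfr]; omega
  · rw [hfr]; exact hq4
  set x := AdjoinRoot.root q with hx_def
  refine ⟨x, algebraMap F (AdjoinRoot q) a + x ^ p - x, ?_⟩
  have hgx : (Polynomial.aeval x) g = 0 := by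
    rw [hx_def, AdjoinRoot.aeval_eq]
    exact AdjoinRoot.mk_eq_zero.2 hq3
  have heval : algebraMap F (AdjoinRoot q) b
      - eAux p (algebraMap F (AdjoinRoot q) a) (x ^ p)
      + eAux p (algebraMap F (AdjoinRoot q) a + x ^ p - x) x = 0 := by
    rw [hg_def] at hgx
    simpa only [map_add, map_sub, Polynomial.aeval_C, Polynomial.aeval_X, map_pow,
      map_eAux] using hgx
  rw [sub_eq_iff_eq_add, mk_eq_truncate, mk_eq_truncate, mk_eq_truncate, mk_eq_truncate,
    ← map_add, ← map_add]
  ext i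
  rw [WittVector.coeff_truncate, WittVector.coeff_truncate]
  fin_cases i
  · rw [WittVector.add_coeff_zero, WittVector.add_coeff_zero]
    simp only [WittVector.coeff_mk]
    norm_num
  · rw [add_coeff_one, add_coeff_one]
    simp only [WittVector.coeff_mk]
    norm_num
    simp only [AdjoinRoot.algebraMap_eq] at heval ⊢
    linear_combination heval
end
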